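/- Let ∼ be an interval equivalence relation on {1,…,d} with classes S_1 < … < S_{d'}. Then for any word σ, inv(σ) = inv(A_∼(σ)) + Σ_{m=1}^{d'} inv(D_{S_m}(σ)). -/

import Mathlib

/-- Words are lists of natural numbers (letters).  `wordInvIJ i j w` counts the
`ij`-inversions of `w`: pairs of positions `a < b` with letter `i` at `a` and
letter `j` at `b` (intended for `i > j`). -/
def wordInvIJ (i j : ℕ) (w : List ℕ) : ℕ :=
  ((Finset.range w.length ×ˢ Finset.range w.length).filter
    (fun p => p.1 < p.2 ∧ w.getD p.1 0 = i ∧ w.getD p.2 0 = j)).card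

/-- `wordInv w` is the total number of inversions of the word `w`:
pairs of positions `a < b` with a larger letter at `a` than at `b`. -/
def wordInv (w : List ℕ) : ℕ :=
  ((Finset.range w.length ×ˢ Finset.range w.length).filter
    (fun p => p.1 < p.2 ∧ w.getD p.2 0 < w.getD p.1 0)).card

/-- `S`-deflation: delete all letters not in `S`, keeping relative order. -/
def deflate (S : Finset ℕ) (w : List ℕ) : List ℕ :=
  w.filter (fun x => decide (x ∈ S))


lemma getD_snoc_lt (w : List ℕ) (x j : ℕ) (h : j < w.length) :
    (w ++ [x]).getD j 0 = w.getD j 0 := List.getD_append w [x] 0 j h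

lemma getD_snoc_eq (w : List ℕ) (x : ℕ) : (w ++ [x]).getD w.length 0 = x := by
  rw [List.getD_eq_getElem?_getD]; simp

lemma countP_eq_card_filter_range (q : ℕ → Bool) (w : List ℕ) :
    w.countP q = ((Finset.range w.length).filter (fun a => q (w.getD a 0))).card := by
  induction w using List.reverseRecOn with
  | nil => simp
  | append_singleton t x ih =>
    rw [List.countP_append, List.length_append, List.length_singleton,
      Finset.range_add_one, Finset.filter_insert]
    have h1 : (Finset.range t.length).filter (fun a => q ((t ++ [x]).getD a 0))
        = (Finset.range t.length).filter (fun a => q (t.getD a 0)) := by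
      apply Finset.filter_congr
      intro a ha
      rw [getD_snoc_lt t x a (Finset.mem_range.mp ha)]
    rw [h1, getD_snoc_eq]
    by_cases hx : q x = true
    · rw [if_pos hx, Finset.card_insert_of_notMem (by simp)]
      simp [hx, ih, Nat.add_comm]
    · rw [if_neg hx]
      simp at hx
      simp [hx, ih]

lemma wordInv_snoc (w : List ℕ) (x : ℕ) :
    wordInv (w ++ [x]) = wordInv w + w.countP (fun y => decide (x < y)) := by
  classical
  have hlen : (w ++ [x]).length = w.length + 1 := by simp
  unfold wordInv
  rw [hlen]
  have key : ((Finset.range (w.length+1) ×ˢ Finset.range (w.length+1)).filter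
      (fun p => p.1 < p.2 ∧ (w ++ [x]).getD p.2 0 < (w ++ [x]).getD p.1 0))
    = ((Finset.range w.length ×ˢ Finset.range w.length).filter
      (fun p => p.1 < p.2 ∧ w.getD p.2 0 < w.getD p.1 0))
      ∪ ((Finset.range w.length).filter (fun a => (decide (x < w.getD a 0) : Bool))).image
          (fun a => (a, w.length)) := by
    ext ⟨a, b⟩
    simp only [Finset.mem_filter, Finset.mem_product, Finset.mem_range, Finset.mem_union,
      Finset.mem_image, decide_eq_true_eq]
    constructor
    · rintro ⟨⟨ha, hb⟩, hab, hlt⟩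
      by_cases hbn : b = w.length
      · subst hbn
        right
        refine ⟨a, ⟨hab, ?_⟩, rfl⟩
        rwa [getD_snoc_lt _ _ _ hab, getD_snoc_eq] at hlt
      · left
        have hb' : b < w.length := by omega
        have ha' : a < w.length := by omega
        rw [getD_snoc_lt _ _ _ ha', getD_snoc_lt _ _ _ hb'] at hlt
        exact ⟨⟨ha', hb'⟩, hab, hlt⟩
    · rintro (⟨⟨ha, hb⟩, hab, hlt⟩ | ⟨a', ⟨ha', hx⟩, heq⟩)
      · rw [getD_snoc_lt _ _ b hb, getD_snoc_lt _ _ a (by omega)]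
        exact ⟨⟨by omega, by omega⟩, hab, hlt⟩
      · obtain ⟨rfl, rfl⟩ : a' = a ∧ w.length = b := by
          constructor <;> [exact ((Prod.mk.injEq ..).mp heq).1; exact ((Prod.mk.injEq ..).mp heq).2]
        rw [getD_snoc_eq, getD_snoc_lt _ _ a' ha']
        exact ⟨⟨by omega, by omega⟩, ha', hx⟩
  have hdisj : Disjoint ((Finset.range w.length ×ˢ Finset.range w.length).filter
      (fun p => p.1 < p.2 ∧ w.getD p.2 0 < w.getD p.1 0))
      (((Finset.range w.length).filter (fun a => (decide (x < w.getD a 0) : Bool))).image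
          (fun a => (a, w.length))) := by
    rw [Finset.disjoint_left]
    rintro ⟨a, b⟩ hmem hmem2
    simp only [Finset.mem_filter, Finset.mem_product, Finset.mem_range] at hmem
    simp only [Finset.mem_image, Finset.mem_filter, Finset.mem_range] at hmem2
    obtain ⟨a', _, heq⟩ := hmem2
    have : w.length = b := ((Prod.mk.injEq ..).mp heq).2
    omega
  rw [key, Finset.card_union_of_disjoint hdisj,
    Finset.card_image_of_injective _ (fun a b h => ((Prod.mk.injEq ..).mp h).1),
    countP_eq_card_filter_range]

lemma countP_split (d : ℕ) (f : ℕ → ℕ)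
    (hmono : ∀ x y, 1 ≤ x → x ≤ y → y ≤ d → f x ≤ f y)
    (x : ℕ) (hx : 1 ≤ x ∧ x ≤ d) (t : List ℕ) (ht : ∀ y ∈ t, 1 ≤ y ∧ y ≤ d) :
    t.countP (fun y => decide (x < y))
      = t.countP (fun y => decide (f x < f y))
        + t.countP (fun y => decide (f y = f x) && decide (x < y)) := by
  induction t with
  | nil => simp
  | cons y t ih =>
    have hy := ht y List.mem_cons_self
    have ih' := ih (fun z hz => ht z (List.mem_cons_of_mem y hz))
    have m1 : x < y → f x ≤ f y := fun h => hmono x y hx.1 (le_of_lt h) hy.2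
    have m2 : y ≤ x → f y ≤ f x := fun h => hmono y x hy.1 h hx.2
    simp only [List.countP_cons, ih']
    by_cases h1 : x < y <;> by_cases h2 : f x < f y <;> by_cases h3 : f y = f x <;>
      simp [h1, h2, h3] <;> omega

/-- with ∼ an interval equivalence relation encoded by the class-index
map f as above, inv(σ) = inv(A_∼(σ)) + Σ_{m=1}^{d'} inv(D_{S_m}σ). -/
theorem inv_eq_inv_ambiguate_add_sum_inv_deflate (d d' : ℕ) (f : ℕ → ℕ) (σ : List ℕ)
    (hσ : ∀ x ∈ σ, 1 ≤ x ∧ x ≤ d)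
    (hmono : ∀ x y, 1 ≤ x → x ≤ y → y ≤ d → f x ≤ f y)
    (hrange : ∀ x, 1 ≤ x → x ≤ d → 1 ≤ f x ∧ f x ≤ d') :
    wordInv σ = wordInv (σ.map f)
      + ∑ m ∈ Finset.Icc 1 d', wordInv (σ.filter (fun x => decide (f x = m))) := by
  induction σ using List.reverseRecOn with
  | nil => simp [wordInv]
  | append_singleton t x ih =>
    have hx := hσ x (by simp)
    have ht : ∀ y ∈ t, 1 ≤ y ∧ y ≤ d := fun y hy => hσ y (by simp [hy])
    have hfx := hrange x hx.1 hx.2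
    have hfxmem : f x ∈ Finset.Icc 1 d' := Finset.mem_Icc.mpr hfx
    -- LHS
    rw [wordInv_snoc]
    -- map part
    have hmap : (t ++ [x]).map f = t.map f ++ [f x] := by simp
    rw [hmap, wordInv_snoc, List.countP_map]
    -- filter part
    have hfilt : ∀ m, (t ++ [x]).filter (fun y => decide (f y = m))
        = t.filter (fun y => decide (f y = m)) ++ (if f x = m then [x] else []) := by
      intro m
      rw [List.filter_append]
      congr 1
      by_cases h : f x = m <;> simp [List.filter, h]
    have hterm : ∀ m, wordInv ((t ++ [x]).filter (fun y => decide (f y = m)))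
        = wordInv (t.filter (fun y => decide (f y = m)))
          + (if m = f x then
              (t.filter (fun y => decide (f y = f x))).countP (fun y => decide (x < y)) else 0) := by
      intro m
      rw [hfilt]
      by_cases h : f x = m
      · subst h
        rw [if_pos rfl, if_pos rfl, wordInv_snoc]
      · rw [if_neg h, if_neg (fun hh => h hh.symm), List.append_nil, Nat.add_zero]
    rw [Finset.sum_congr rfl (fun m _ => hterm m), Finset.sum_add_distrib,
      Finset.sum_ite_eq' _ (f x), if_pos hfxmem, List.countP_filter]
    rw [ih ht, countP_split d f hmono x hx t ht]
    have : (List.countP (fun y => decide (f x < f y)) t)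
        = List.countP ((fun y => decide (f x < y)) ∘ f) t := rfl
    rw [this]
    have hcomm : (fun a => decide (x < a) && decide (f a = f x))
        = (fun y => decide (f y = f x) && decide (x < y)) := by
      funext a; exact Bool.and_comm _ _
    rw [hcomm]
    omega
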